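/- For 1 ≤ m ≤ ⌊(n−1)/2⌋, the polynomial s_m := ∑_{k=0}^{m} (−1)^k · ((2m+1−2k)/2) · x_k x_{2m+1−k} satisfies D_n(s_m) = f_m, where f_m = ∑_{k=0}^{m−1} (−1)^k x_k x_{2m−k} + (1/2)(−1)^m x_m^2. -/

import Mathlib

open MvPolynomial Finset
open Fin.NatCast

noncomputable def Dw (K : Type) [CommRing K] (n : ℕ) :
    Derivation K (MvPolynomial (Fin (n + 1)) K) (MvPolynomial (Fin (n + 1)) K) :=
  MvPolynomial.mkDerivation K fun i =>
    if i.1 = 0 then 0 else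
      MvPolynomial.X ⟨i.1 - 1, Nat.lt_of_le_of_lt (Nat.sub_le _ _) i.isLt⟩

noncomputable def fpoly (K : Type) [Field K] (n m : ℕ) : MvPolynomial (Fin (n + 1)) K :=
  ∑ k ∈ Finset.range m,
      ((-1 : K) ^ k) • (X ((k : ℕ) : Fin (n + 1)) * X ((2 * m - k : ℕ) : Fin (n + 1)))
    + (((-1 : K) ^ m) / 2) • (X ((m : ℕ) : Fin (n + 1))) ^ 2

noncomputable def spoly (K : Type) [Field K] (n m : ℕ) : MvPolynomial (Fin (n + 1)) K :=
  ∑ k ∈ Finset.range (m + 1),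
    (((-1 : K) ^ k) * ((2 * m + 1 - 2 * k : ℕ) : K) / 2) •
      (X ((k : ℕ) : Fin (n + 1)) * X ((2 * m + 1 - k : ℕ) : Fin (n + 1)))

/-
Write `u k = x_k x_{2m-k}`. By Leibniz, `D (x_k x_{2m+1-k}) = u (k-1) + u k` (without the first
summand when `k = 0`), so `D s_m` is an Abel summation: the coefficient of `u k` is
`c k + c (k+1) = (-1)^k` for `k < m`, and `c m = (-1)^m / 2`, where `c k = (-1)^k (2m+1-2k)/2`.
-/

theorem sum_range_succ_smul_shift_add {R M : Type*} [Semiring R] [AddCommMonoid M] [Module R M]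
    (c : ℕ → R) (u : ℕ → M) (m : ℕ) :
    ∑ k ∈ range (m + 1), c k • ((if k = 0 then 0 else u (k - 1)) + u k) =
      ∑ k ∈ range m, (c k + c (k + 1)) • u k + c m • u m := by
  simp only [smul_add, sum_add_distrib, add_smul]
  rw [sum_range_succ' _ m, sum_range_succ _ m]
  simp only [if_pos, smul_zero, add_zero, Nat.succ_ne_zero, if_false, Nat.add_sub_cancel]
  abel

section Dw

variable (K : Type) [CommRing K] {n : ℕ}

theorem Dw_X_zero : Dw K n (X ((0 : ℕ) : Fin (n + 1))) = 0 := by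
  simp [Dw, mkDerivation_X]

theorem Dw_X_succ {j : ℕ} (hj : j < n) :
    Dw K n (X ((j + 1 : ℕ) : Fin (n + 1))) = X ((j : ℕ) : Fin (n + 1)) := by
  have hval : (((j + 1 : ℕ)) : Fin (n + 1)).val = j + 1 := Fin.val_cast_of_lt (by omega)
  rw [Dw, mkDerivation_X, if_neg (by omega)]
  congr 1
  ext
  simp only [hval, Fin.val_cast_of_lt (show j < n + 1 by omega), Nat.add_sub_cancel]

theorem Dw_X_mul_X_two_mul_add_one_sub {m k : ℕ} (hn : 2 * m + 1 ≤ n) (hk : k ≤ m) :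
    Dw K n (X ((k : ℕ) : Fin (n + 1)) * X ((2 * m + 1 - k : ℕ) : Fin (n + 1))) =
      (if k = 0 then 0 else
          X ((k - 1 : ℕ) : Fin (n + 1)) * X ((2 * m - (k - 1) : ℕ) : Fin (n + 1))) +
        X ((k : ℕ) : Fin (n + 1)) * X ((2 * m - k : ℕ) : Fin (n + 1)) := by
  have hright : 2 * m + 1 - k = 2 * m - k + 1 := by omega
  rw [Derivation.leibniz, smul_eq_mul, smul_eq_mul, hright, Dw_X_succ K (by omega)]
  rcases k with _ | j
  · rw [Dw_X_zero, mul_zero, if_pos rfl, zero_add, add_zero, mul_comm]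
  · have hleft : 2 * m - (j + 1 - 1) = 2 * m - (j + 1) + 1 := by omega
    rw [if_neg j.succ_ne_zero, Dw_X_succ K (by omega), hleft, Nat.add_sub_cancel]
    ring

end Dw

theorem spoly_coeff_add_succ {K : Type} [Field K] [NeZero (2 : K)] {m k : ℕ} (hk : k < m) :
    (-1 : K) ^ k * ((2 * m + 1 - 2 * k : ℕ) : K) / 2 +
        (-1) ^ (k + 1) * ((2 * m + 1 - 2 * (k + 1) : ℕ) : K) / 2 = (-1) ^ k := by
  rw [Nat.cast_sub (by omega), Nat.cast_sub (by omega)]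
  push_cast
  field_simp
  ring

theorem spoly_coeff_self (K : Type) [DivisionRing K] (m : ℕ) :
    (-1 : K) ^ m * ((2 * m + 1 - 2 * m : ℕ) : K) / 2 = (-1) ^ m / 2 := by
  rw [Nat.add_sub_cancel_left, Nat.cast_one, mul_one]

theorem stmt2 (K : Type) [Field K] [CharZero K] (n m : ℕ)
    (h1 : 1 ≤ m) (h2 : m ≤ (n - 1) / 2) :
    Dw K n (spoly K n m) = fpoly K n m := by
  have hn : 2 * m + 1 ≤ n := by omega
  set c : ℕ → K := fun k => (-1) ^ k * ((2 * m + 1 - 2 * k : ℕ) : K) / 2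
  set u : ℕ → MvPolynomial (Fin (n + 1)) K :=
    fun k => X ((k : ℕ) : Fin (n + 1)) * X ((2 * m - k : ℕ) : Fin (n + 1))
  calc Dw K n (spoly K n m)
      = ∑ k ∈ range (m + 1), c k • ((if k = 0 then 0 else u (k - 1)) + u k) := by
        rw [spoly, map_sum]
        refine sum_congr rfl fun k hk => ?_
        rw [Derivation.map_smul, Dw_X_mul_X_two_mul_add_one_sub K hn (mem_range_succ_iff.mp hk)]
    _ = ∑ k ∈ range m, (c k + c (k + 1)) • u k + c m • u m := sum_range_succ_smul_shift_add c u m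
    _ = fpoly K n m := by
        rw [fpoly]
        congr 1
        · exact sum_congr rfl fun k hk => by rw [spoly_coeff_add_succ (mem_range.mp hk)]
        · rw [show c m = (-1) ^ m / 2 from spoly_coeff_self K m, sq]
          simp only [u, two_mul, Nat.add_sub_cancel]
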